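/- There exists a constant c₁ > 0, depending only on α and d, such that for every w ∈ ℤ^d, every real R ≥ 1, every x ∈ B(w,R), and every real r ∈ [1, R], one has V(w,R) ≤ c₁ · (R/r)^{c₁} · V(x,r). In particular, V(w,R) ≤ c₁ · R^{c₁} · ν_x for every x ∈ B(w,R). -/

import Mathlib

open scoped BigOperators

/-- ℓ∞ norm on ℤ^d, as a natural number. -/
def linf {d : ℕ} (x : Fin d → ℤ) : ℕ :=
  Finset.univ.sup fun i => (x i).natAbs

/-- ℓ¹ norm on ℤ^d, as a natural number. -/
def l1 {d : ℕ} (x : Fin d → ℤ) : ℕ :=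
  ∑ i, (x i).natAbs

/-- `ν x = (max(|x|,1))^α`. -/
noncomputable def nu (α : ℝ) {d : ℕ} (x : Fin d → ℤ) : ℝ :=
  ((max (linf x) 1 : ℕ) : ℝ) ^ α

/-- The conductance `μ x y = (max(|x|,|y|))^(-α)` if `|x-y|₁ = 1`, and `0` otherwise. -/
noncomputable def mu (α : ℝ) {d : ℕ} (x y : Fin d → ℤ) : ℝ :=
  if l1 (x - y) = 1 then ((max (linf x) (linf y) : ℕ) : ℝ) ^ (-α) else 0

/-- `z 0, …, z m` is a path: consecutive points are at ℓ¹-distance one. -/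
def IsPath {d : ℕ} (z : ℕ → Fin d → ℤ) (m : ℕ) : Prop :=
  ∀ i < m, l1 (z (i + 1) - z i) = 1

/-- The metric `ρ(x,y)`: `0` if `x = y`, otherwise the infimum of `∑ ν (z i)` over
paths from `x` to `y`. -/
noncomputable def rho (α : ℝ) {d : ℕ} (x y : Fin d → ℤ) : ℝ :=
  if x = y then 0
  else sInf {S : ℝ | ∃ (m : ℕ) (z : ℕ → Fin d → ℤ), IsPath z m ∧ z 0 = x ∧ z m = y ∧
    S = ∑ i ∈ Finset.range (m + 1), nu α (z i)}

/-- `ρ_x(r) = (max(|x|,r))^α · r`. -/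
noncomputable def rhox (α : ℝ) {d : ℕ} (x : Fin d → ℤ) (r : ℝ) : ℝ :=
  (max ((linf x : ℕ) : ℝ) r) ^ α * r

/-- `ρ_x⁻¹(r) = (max(|x|, r^{1/(1+α)}))^{-α} · r`, the inverse function of `ρ_x`. -/
noncomputable def rhoxInv (α : ℝ) {d : ℕ} (x : Fin d → ℤ) (r : ℝ) : ℝ :=
  (max ((linf x : ℕ) : ℝ) (r ^ (1 / (1 + α)))) ^ (-α) * r

/-- `V(x,r) = ν(B(x,r))`, the ν-volume of the ℓ∞-ball of radius `r` about `x`. -/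
noncomputable def V (α : ℝ) {d : ℕ} (x : Fin d → ℤ) (r : ℝ) : ℝ :=
  ∑' y : {y : Fin d → ℤ // ((linf (y - x) : ℕ) : ℝ) ≤ r}, nu α y.1

/-- `V_ρ(x,r) = ν(B_ρ(x,r))`, the ν-volume of the ρ-ball of radius `r` about `x`. -/
noncomputable def Vrho (α : ℝ) {d : ℕ} (x : Fin d → ℤ) (r : ℝ) : ℝ :=
  ∑' y : {y : Fin d → ℤ // rho α x y ≤ r}, nu α y.1

/-!
For `r ≥ 1` the volume `V(x, r)` is comparable, with constants depending only on `α` and `d`, to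
the profile `r ^ d * max(|x|, r) ^ α`. The ball has about `r ^ d` points. For `α ≥ 0` a fixed
fraction of them, an outward half-cube, has norm at least `max(|x|, r) / 2`. For `α ≤ 0` a ball
far from the origin is bounded pointwise, and one near it lies in a cube centred at `0`, whose
volume is bounded through a single coordinate by `Σ_{1 ≤ k ≤ m} k ^ α ≤ m ^ (α + 1) / (α + 1)`
(Bernoulli's inequality, telescoped); this is where `α > -1` enters. If `|x - w| ≤ R` and
`1 ≤ r ≤ R`, the scales `max(|w|, R)` and `max(|x|, r)` differ by a factor at most `2R / r`, so the
two profiles, and hence the two volumes, differ by at most a constant times `(R / r) ^ (d + |α|)`.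
-/

open Finset

section Cube

variable {d : ℕ}

lemma linf_le_iff {z : Fin d → ℤ} {n : ℕ} : linf z ≤ n ↔ ∀ i, (z i).natAbs ≤ n := by
  simp [linf, Finset.sup_le_iff]

lemma natAbs_le_linf (z : Fin d → ℤ) (i : Fin d) : (z i).natAbs ≤ linf z :=
  Finset.le_sup (f := fun i => (z i).natAbs) (mem_univ i)

lemma linf_sub_comm (u v : Fin d → ℤ) : linf (u - v) = linf (v - u) := by
  simp only [linf, Pi.sub_apply, ← Int.natAbs_neg (v _ - u _), neg_sub]

lemma linf_le_linf_add_linf_sub (x w : Fin d → ℤ) : linf x ≤ linf w + linf (x - w) :=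
  linf_le_iff.2 fun i => by
    have := natAbs_le_linf w i
    have := natAbs_le_linf (x - w) i
    simp only [Pi.sub_apply] at this
    omega

noncomputable def cube (x : Fin d → ℤ) (n : ℕ) : Finset (Fin d → ℤ) :=
  Fintype.piFinset fun i => Icc (x i - n) (x i + n)

lemma mem_cube {x y : Fin d → ℤ} {n : ℕ} : y ∈ cube x n ↔ linf (y - x) ≤ n := by
  simp only [cube, Fintype.mem_piFinset, mem_Icc, linf_le_iff, Pi.sub_apply]
  exact forall_congr' fun i => by omega

lemma card_cube (x : Fin d → ℤ) (n : ℕ) : #(cube x n) = (2 * n + 1) ^ d := by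
  simp only [cube, Fintype.card_piFinset, Int.card_Icc]
  rw [prod_congr rfl fun i _ => (by omega : (x i + n + 1 - (x i - n)).toNat = 2 * n + 1)]
  simp

lemma linf_le_linf_add_of_mem_cube {x y : Fin d → ℤ} {n : ℕ} (hy : y ∈ cube x n) :
    linf y ≤ linf x + n :=
  (linf_le_linf_add_linf_sub y x).trans (by rw [mem_cube] at hy; omega)

lemma linf_le_linf_add_of_mem_cube' {x y : Fin d → ℤ} {n : ℕ} (hy : y ∈ cube x n) :
    linf x ≤ linf y + n :=
  (linf_le_linf_add_linf_sub x y).trans (by rw [mem_cube, linf_sub_comm] at hy; omega)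

lemma nu_nonneg (α : ℝ) (y : Fin d → ℤ) : 0 ≤ nu α y :=
  Real.rpow_nonneg (Nat.cast_nonneg _) _

lemma V_eq_sum_cube (α : ℝ) (x : Fin d → ℤ) {r : ℝ} (hr : 0 ≤ r) :
    V α x r = ∑ y ∈ cube x ⌊r⌋₊, nu α y := by
  have h : {y : Fin d → ℤ | ((linf (y - x) : ℕ) : ℝ) ≤ r} = ↑(cube x ⌊r⌋₊) := by
    ext y
    simp only [Set.mem_ofPred_eq, mem_coe, mem_cube, ← Nat.le_floor_iff hr]
  rw [V, ← Finset.tsum_subtype]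
  exact tsum_congr_set_coe (nu α) h

lemma V_nonneg (α : ℝ) (x : Fin d → ℤ) {r : ℝ} (hr : 0 ≤ r) : 0 ≤ V α x r := by
  rw [V_eq_sum_cube α x hr]
  exact sum_nonneg fun y _ => nu_nonneg α y

end Cube

lemma rpow_le_rpow_mul_rpow_of_le_mul {a b c α : ℝ} (hα : 0 ≤ α) (hb : 0 ≤ b) (hc : 0 ≤ c)
    (ha : 0 ≤ a) (h : b ≤ c * a) : b ^ α ≤ c ^ α * a ^ α :=
  (Real.mul_rpow hc ha).symm ▸ Real.rpow_le_rpow hb h hα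

lemma rpow_le_rpow_neg_mul_rpow_of_le_mul {a b c α : ℝ} (hα : α ≤ 0) (hb : 0 < b) (hc : 0 < c)
    (h : b ≤ c * a) : a ^ α ≤ c ^ (-α) * b ^ α := by
  have ha : 0 ≤ a := nonneg_of_mul_nonneg_right (hb.le.trans h) hc
  calc a ^ α = c ^ (-α) * (c * a) ^ α := by
        rw [Real.mul_rpow hc.le ha, ← mul_assoc, ← Real.rpow_add hc, neg_add_cancel,
          Real.rpow_zero, one_mul]
    _ ≤ c ^ (-α) * b ^ α :=
        mul_le_mul_of_nonneg_left (Real.rpow_le_rpow_of_nonpos hb h hα) (by positivity)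

section Profile

variable {d : ℕ}

noncomputable def scale (x : Fin d → ℤ) (r : ℝ) : ℝ := max ((linf x : ℕ) : ℝ) r

noncomputable def volumeProfile (α : ℝ) (x : Fin d → ℤ) (r : ℝ) : ℝ := r ^ d * scale x r ^ α

lemma le_scale (x : Fin d → ℤ) (r : ℝ) : r ≤ scale x r := le_max_right _ _

lemma linf_le_scale (x : Fin d → ℤ) (r : ℝ) : ((linf x : ℕ) : ℝ) ≤ scale x r := le_max_left _ _

lemma volumeProfile_nonneg (α : ℝ) (x : Fin d → ℤ) {r : ℝ} (hr : 0 ≤ r) :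
    0 ≤ volumeProfile α x r :=
  mul_nonneg (pow_nonneg hr d) (Real.rpow_nonneg (hr.trans (le_scale x r)) α)

lemma volumeProfile_one (α : ℝ) (x : Fin d → ℤ) : volumeProfile α x 1 = nu α x := by
  simp [volumeProfile, scale, nu]

lemma scale_le_two_mul_scale {x w : Fin d → ℤ} {r R : ℝ} (hxw : ((linf (x - w) : ℕ) : ℝ) ≤ R)
    (hrR : r ≤ R) : scale x r ≤ 2 * scale w R := by
  have hx : ((linf x : ℕ) : ℝ) ≤ linf w + linf (x - w) := by
    exact_mod_cast linf_le_linf_add_linf_sub x w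
  exact max_le (by linarith [linf_le_scale w R, le_scale w R]) (by linarith [le_scale w R])

lemma scale_le_two_mul_div_mul_scale {x w : Fin d → ℤ} {r R : ℝ}
    (hxw : ((linf (x - w) : ℕ) : ℝ) ≤ R) (hr : 0 < r) (hrR : r ≤ R) :
    scale w R ≤ 2 * (R / r) * scale x r := by
  have hRr : 1 ≤ R / r := (one_le_div hr).2 hrR
  have hR : R ≤ R / r * scale x r := by
    calc R = R / r * r := by field_simp
      _ ≤ R / r * scale x r := by gcongr; exact le_scale x r
  have hx : scale x r ≤ R / r * scale x r :=
    le_mul_of_one_le_left (hr.le.trans (le_scale x r)) hRr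
  have hw : ((linf w : ℕ) : ℝ) ≤ linf x + linf (w - x) := by
    exact_mod_cast linf_le_linf_add_linf_sub w x
  rw [linf_sub_comm] at hxw
  have := linf_le_scale x r
  exact max_le (by linarith) (by linarith)

end Profile

section Estimates

variable {d : ℕ} {α : ℝ}

lemma max_linf_one_le_two_mul_scale {x y : Fin d → ℤ} {r : ℝ} (hr : 1 ≤ r)
    (hy : y ∈ cube x ⌊r⌋₊) : ((max (linf y) 1 : ℕ) : ℝ) ≤ 2 * scale x r := by
  have hn : 1 ≤ ⌊r⌋₊ := Nat.le_floor (by simpa using hr)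
  have h : ((max (linf y) 1 : ℕ) : ℝ) ≤ linf x + ⌊r⌋₊ := by
    exact_mod_cast (show max (linf y) 1 ≤ linf x + ⌊r⌋₊ by
      have := linf_le_linf_add_of_mem_cube hy; omega)
  linarith [linf_le_scale x r, le_scale x r, Nat.floor_le (zero_le_one.trans hr)]

lemma V_le_of_forall_nu_le {x : Fin d → ℤ} {r B : ℝ} (hr : 1 ≤ r) (hB : 0 ≤ B)
    (h : ∀ y ∈ cube x ⌊r⌋₊, nu α y ≤ B * scale x r ^ α) :
    V α x r ≤ 3 ^ d * B * volumeProfile α x r := by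
  have hs : 0 ≤ scale x r ^ α := Real.rpow_nonneg (by linarith [le_scale x r]) α
  have hn : ((2 * ⌊r⌋₊ + 1 : ℕ) : ℝ) ≤ 3 * r := by
    push_cast; linarith [Nat.floor_le (zero_le_one.trans hr)]
  rw [V_eq_sum_cube α x (by linarith), volumeProfile]
  calc ∑ y ∈ cube x ⌊r⌋₊, nu α y ≤ #(cube x ⌊r⌋₊) • (B * scale x r ^ α) :=
        sum_le_card_nsmul _ _ _ h
    _ = ((2 * ⌊r⌋₊ + 1 : ℕ) : ℝ) ^ d * (B * scale x r ^ α) := by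
        rw [card_cube, nsmul_eq_mul, Nat.cast_pow]
    _ ≤ (3 * r) ^ d * (B * scale x r ^ α) := by gcongr
    _ = 3 ^ d * B * (r ^ d * scale x r ^ α) := by ring

lemma volumeProfile_le_of_subset {x : Fin d → ℤ} {r A B : ℝ} {S : Finset (Fin d → ℤ)}
    (hr : 1 ≤ r) (hA : 0 ≤ A) (hB : 0 ≤ B) (hS : S ⊆ cube x ⌊r⌋₊) (hcard : r ^ d ≤ A * #S)
    (h : ∀ y ∈ S, scale x r ^ α ≤ B * nu α y) :
    volumeProfile α x r ≤ A * B * V α x r := by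
  have hs : 0 ≤ scale x r ^ α := Real.rpow_nonneg (by linarith [le_scale x r]) α
  rw [V_eq_sum_cube α x (by linarith), volumeProfile]
  calc r ^ d * scale x r ^ α ≤ A * #S * scale x r ^ α := by gcongr
    _ = A * ∑ _ ∈ S, scale x r ^ α := by rw [sum_const, nsmul_eq_mul, mul_assoc]
    _ ≤ A * ∑ y ∈ S, B * nu α y := by gcongr with y hy; exact h y hy
    _ = A * B * ∑ y ∈ S, nu α y := by rw [← mul_sum, mul_assoc]
    _ ≤ A * B * ∑ y ∈ cube x ⌊r⌋₊, nu α y := by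
        gcongr
        exact fun y _ _ => nu_nonneg α y

lemma V_le_volumeProfile_of_nonneg (hα : 0 ≤ α) (x : Fin d → ℤ) {r : ℝ} (hr : 1 ≤ r) :
    V α x r ≤ 3 ^ d * 2 ^ α * volumeProfile α x r := by
  refine V_le_of_forall_nu_le hr (by positivity) fun y hy => ?_
  exact rpow_le_rpow_mul_rpow_of_le_mul hα (Nat.cast_nonneg _) zero_le_two
    (by linarith [le_scale x r]) (max_linf_one_le_two_mul_scale hr hy)

lemma volumeProfile_le_V_of_nonpos (hα : α ≤ 0) (x : Fin d → ℤ) {r : ℝ} (hr : 1 ≤ r) :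
    volumeProfile α x r ≤ 2 ^ (-α) * V α x r := by
  have hcard : r ^ d ≤ 1 * #(cube x ⌊r⌋₊) := by
    rw [card_cube, one_mul, Nat.cast_pow]
    gcongr
    push_cast
    linarith [Nat.lt_floor_add_one r, Nat.floor_le (zero_le_one.trans hr)]
  simpa using volumeProfile_le_of_subset hr zero_le_one (by positivity) subset_rfl hcard
    fun y hy => rpow_le_rpow_neg_mul_rpow_of_le_mul hα (by simp) zero_lt_two
      (max_linf_one_le_two_mul_scale hr hy)

end Estimates

section OuterHalfCube

variable {d : ℕ} {α : ℝ}

noncomputable def outerHalfCube (x : Fin d → ℤ) (n : ℕ) : Finset (Fin d → ℤ) :=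
  Fintype.piFinset fun i =>
    if 0 ≤ x i then Icc (x i + (n / 2 + 1 : ℕ)) (x i + n)
    else Icc (x i - n) (x i - (n / 2 + 1 : ℕ))

lemma natAbs_of_mem_outerHalfCube {x y : Fin d → ℤ} {n : ℕ} (hy : y ∈ outerHalfCube x n)
    (i : Fin d) :
    (y i - x i).natAbs ≤ n ∧ (x i).natAbs ≤ (y i).natAbs ∧ n / 2 + 1 ≤ (y i).natAbs := by
  have := Fintype.mem_piFinset.1 hy i
  split_ifs at this <;> rw [mem_Icc] at this <;> omega

lemma outerHalfCube_subset_cube (x : Fin d → ℤ) (n : ℕ) : outerHalfCube x n ⊆ cube x n :=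
  fun _ hy => mem_cube.2 (linf_le_iff.2 fun i => (natAbs_of_mem_outerHalfCube hy i).1)

lemma card_outerHalfCube (x : Fin d → ℤ) (n : ℕ) : #(outerHalfCube x n) = (n - n / 2) ^ d := by
  simp only [outerHalfCube, Fintype.card_piFinset]
  rw [prod_congr rfl fun i _ => (?_ : _ = n - n / 2)]
  · simp
  · split_ifs <;> rw [Int.card_Icc] <;> omega

lemma volumeProfile_le_V_of_nonneg (hα : 0 ≤ α) (hd : 1 ≤ d) (x : Fin d → ℤ) {r : ℝ}
    (hr : 1 ≤ r) : volumeProfile α x r ≤ 3 ^ d * 2 ^ α * V α x r := by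
  set n := ⌊r⌋₊
  have hn : 1 ≤ n := Nat.le_floor (by simpa using hr)
  have hrn : r < n + 1 := Nat.lt_floor_add_one r
  refine volumeProfile_le_of_subset hr (by positivity) (by positivity)
    (outerHalfCube_subset_cube x n) ?_ fun y hy => ?_
  · rw [card_outerHalfCube, Nat.cast_pow, ← mul_pow]
    gcongr
    have : ((n + 1 : ℕ) : ℝ) ≤ ((3 * (n - n / 2) : ℕ) : ℝ) := by exact_mod_cast (by omega)
    push_cast at this
    linarith
  · have hx : linf x ≤ linf y :=
      linf_le_iff.2 fun i => (natAbs_of_mem_outerHalfCube hy i).2.1.trans (natAbs_le_linf y i)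
    have hy' : n / 2 + 1 ≤ linf y :=
      (natAbs_of_mem_outerHalfCube hy ⟨0, hd⟩).2.2.trans (natAbs_le_linf y _)
    have h2 : (n : ℝ) + 1 ≤ 2 * ((max (linf y) 1 : ℕ) : ℝ) := by
      exact_mod_cast (show n + 1 ≤ 2 * max (linf y) 1 by omega)
    have h1 : ((linf x : ℕ) : ℝ) ≤ ((max (linf y) 1 : ℕ) : ℝ) := by exact_mod_cast (by omega)
    exact rpow_le_rpow_mul_rpow_of_le_mul hα (by linarith [le_scale x r]) zero_le_two
      (Nat.cast_nonneg _) (max_le (by linarith) (by linarith))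

end OuterHalfCube

section NegativeExponent

variable {α : ℝ}

lemma mul_add_one_rpow_le_sub (hα1 : -1 < α) (hα : α ≤ 0) {k : ℝ} (hk : 0 ≤ k) :
    (α + 1) * (k + 1) ^ α ≤ (k + 1) ^ (α + 1) - k ^ (α + 1) := by
  have hk1 : 0 < k + 1 := by linarith
  have hs : -1 ≤ -1 / (k + 1) := by
    rw [neg_div, neg_le_neg_iff, div_le_one hk1]; linarith
  have hk' : k = (k + 1) * (1 + -1 / (k + 1)) := by field_simp; ring
  calc (α + 1) * (k + 1) ^ α
      = (k + 1) ^ (α + 1) - (k + 1) ^ (α + 1) * (1 + (α + 1) * (-1 / (k + 1))) := by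
        rw [Real.rpow_add_one hk1.ne']; field_simp; ring
    _ ≤ (k + 1) ^ (α + 1) - (k + 1) ^ (α + 1) * (1 + -1 / (k + 1)) ^ (α + 1) := by
        gcongr
        exact rpow_one_add_le_one_add_mul_self hs (by linarith) (by linarith)
    _ = (k + 1) ^ (α + 1) - k ^ (α + 1) := by
        rw [← Real.mul_rpow hk1.le (by linarith), ← hk']

lemma sum_range_add_one_rpow_le (hα1 : -1 < α) (hα : α ≤ 0) (m : ℕ) :
    ∑ k ∈ range m, ((k : ℝ) + 1) ^ α ≤ (m : ℝ) ^ (α + 1) / (α + 1) := by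
  have hp : 0 < α + 1 := by linarith
  rw [le_div_iff₀ hp, sum_mul]
  calc ∑ k ∈ range m, ((k : ℝ) + 1) ^ α * (α + 1)
      ≤ ∑ k ∈ range m, ((((k + 1 : ℕ) : ℝ)) ^ (α + 1) - ((k : ℕ) : ℝ) ^ (α + 1)) :=
        sum_le_sum fun k _ => by
          push_cast; rw [mul_comm]; exact mul_add_one_rpow_le_sub hα1 hα k.cast_nonneg
    _ = (m : ℝ) ^ (α + 1) := by
        rw [sum_range_sub (fun k : ℕ => ((k : ℝ)) ^ (α + 1))]
        simp [Real.zero_rpow hp.ne']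

lemma sum_Icc_max_natAbs_rpow_le (hα1 : -1 < α) (hα : α ≤ 0) (m : ℕ) :
    ∑ t ∈ Icc (-(m : ℤ)) m, ((max t.natAbs 1 : ℕ) : ℝ) ^ α
      ≤ 2 * (1 + (m : ℝ) ^ (α + 1) / (α + 1)) := by
  set g : ℕ → ℝ := fun k => ((max k 1 : ℕ) : ℝ) ^ α
  have hg : ∀ k, 0 ≤ g k := fun k => Real.rpow_nonneg (Nat.cast_nonneg _) α
  have hfiber (k : ℕ) : ∑ t ∈ Icc (-(m : ℤ)) m with t.natAbs = k, g t.natAbs ≤ 2 * g k := by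
    have hsub : {t ∈ Icc (-(m : ℤ)) m | t.natAbs = k} ⊆ {(k : ℤ), -(k : ℤ)} := fun t ht => by
      simp only [mem_filter, mem_insert, mem_singleton] at ht ⊢; omega
    have hcard : #{t ∈ Icc (-(m : ℤ)) m | t.natAbs = k} ≤ 2 :=
      (card_le_card hsub).trans (card_insert_le _ _)
    rw [sum_congr rfl fun t ht => by rw [(mem_filter.1 ht).2], sum_const, nsmul_eq_mul]
    exact mul_le_mul_of_nonneg_right (by exact_mod_cast hcard) (hg k)
  have hrange : ∑ k ∈ range (m + 1), g k ≤ 1 + (m : ℝ) ^ (α + 1) / (α + 1) := by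
    rw [sum_range_succ']
    simpa [g, add_comm] using sum_range_add_one_rpow_le hα1 hα m
  calc ∑ t ∈ Icc (-(m : ℤ)) m, g t.natAbs
      = ∑ k ∈ range (m + 1), ∑ t ∈ Icc (-(m : ℤ)) m with t.natAbs = k, g t.natAbs :=
        (sum_fiberwise_of_maps_to (fun t ht => by simp only [mem_Icc] at ht; simp; omega) _).symm
    _ ≤ ∑ k ∈ range (m + 1), 2 * g k := sum_le_sum fun k _ => hfiber k
    _ ≤ 2 * (1 + (m : ℝ) ^ (α + 1) / (α + 1)) := by rw [← mul_sum]; gcongr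

end NegativeExponent

section UpperBound

variable {d : ℕ} {α : ℝ}

lemma sum_cube_zero_nu_le (hα1 : -1 < α) (hα : α ≤ 0) (hd : 1 ≤ d) (m : ℕ) {ρ : ℝ}
    (hρ : 2 * (m : ℝ) + 1 ≤ ρ) :
    ∑ y ∈ cube (0 : Fin d → ℤ) m, nu α y
      ≤ 2 * (1 + 1 / (α + 1)) * (ρ ^ (d - 1) * ρ ^ (α + 1)) := by
  have hp : 0 < α + 1 := by linarith
  have hρ1 : 1 ≤ ρ := by linarith [(m.cast_nonneg : (0 : ℝ) ≤ m)]
  have hmρ : (m : ℝ) ^ (α + 1) ≤ ρ ^ (α + 1) := by gcongr; linarith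
  have h1ρ : 1 ≤ ρ ^ (α + 1) := Real.one_le_rpow hρ1 hp.le
  have hcube : cube (0 : Fin d → ℤ) m = Fintype.piFinset fun _ => Icc (-(m : ℤ)) m := by
    simp [cube]
  calc ∑ y ∈ cube (0 : Fin d → ℤ) m, nu α y
      ≤ ∑ y ∈ cube (0 : Fin d → ℤ) m, ((max (y ⟨0, hd⟩).natAbs 1 : ℕ) : ℝ) ^ α :=
        sum_le_sum fun y _ => Real.rpow_le_rpow_of_nonpos (by positivity)
          (by exact_mod_cast max_le_max (natAbs_le_linf y _) le_rfl) hα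
    _ = ((2 * m + 1 : ℕ) : ℝ) ^ (d - 1)
          * ∑ t ∈ Icc (-(m : ℤ)) m, ((max t.natAbs 1 : ℕ) : ℝ) ^ α := by
        rw [hcube, Fintype.sum_piFinset_apply (fun t : ℤ => ((max t.natAbs 1 : ℕ) : ℝ) ^ α),
          Int.card_Icc, nsmul_eq_mul, Fintype.card_fin,
          show (↑m + 1 - -↑m : ℤ).toNat = 2 * m + 1 by omega, Nat.cast_pow]
    _ ≤ ρ ^ (d - 1) * (2 * (1 + (m : ℝ) ^ (α + 1) / (α + 1))) := by
        gcongr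
        · push_cast; exact hρ
        · exact sum_Icc_max_natAbs_rpow_le hα1 hα m
    _ ≤ ρ ^ (d - 1) * (2 * (ρ ^ (α + 1) + ρ ^ (α + 1) / (α + 1))) := by gcongr
    _ = 2 * (1 + 1 / (α + 1)) * (ρ ^ (d - 1) * ρ ^ (α + 1)) := by ring

lemma V_le_volumeProfile_of_two_mul_floor_le (hα : α ≤ 0) {w : Fin d → ℤ} {R : ℝ}
    (hR : 1 ≤ R) (hw : 2 * ⌊R⌋₊ ≤ linf w) :
    V α w R ≤ 3 ^ d * 2 ^ (-α) * volumeProfile α w R := by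
  have hn : 1 ≤ ⌊R⌋₊ := Nat.le_floor (by simpa using hR)
  have hRn : R < ⌊R⌋₊ + 1 := Nat.lt_floor_add_one R
  refine V_le_of_forall_nu_le hR (by positivity) fun y hy => ?_
  have hy' : scale w R ≤ 2 * ((max (linf y) 1 : ℕ) : ℝ) := by
    have := linf_le_linf_add_of_mem_cube' hy
    have h1 : ((linf w : ℕ) : ℝ) ≤ 2 * ((max (linf y) 1 : ℕ) : ℝ) := by
      exact_mod_cast (by omega)
    have h2 : (⌊R⌋₊ : ℝ) + 1 ≤ linf w := by exact_mod_cast (by omega)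
    exact max_le h1 (by linarith)
  exact rpow_le_rpow_neg_mul_rpow_of_le_mul hα (by linarith [le_scale w R]) zero_lt_two hy'

lemma V_le_volumeProfile_of_lt_two_mul_floor (hα1 : -1 < α) (hα : α ≤ 0) (hd : 1 ≤ d)
    {w : Fin d → ℤ} {R : ℝ} (hR : 1 ≤ R) (hw : linf w < 2 * ⌊R⌋₊) :
    V α w R ≤ 4 * 7 ^ d * (1 + 1 / (α + 1)) * volumeProfile α w R := by
  set n := ⌊R⌋₊
  have hnR : (n : ℝ) ≤ R := Nat.floor_le (by linarith)
  have hsub : cube w n ⊆ cube 0 (3 * n) := fun y hy => by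
    have := linf_le_linf_add_of_mem_cube hy
    rw [mem_cube, sub_zero]; omega
  have hscale : scale w R ≤ 2 * R := by
    have : ((linf w : ℕ) : ℝ) ≤ 2 * n := by exact_mod_cast hw.le
    exact max_le (by linarith) (by linarith)
  have hs : 0 < scale w R := by linarith [le_scale w R]
  have htwo : (2 : ℝ) ^ (-α) ≤ 2 := by
    simpa using Real.rpow_le_rpow_of_exponent_le one_le_two (by linarith : -α ≤ 1)
  have hRα : R ^ α ≤ 2 * scale w R ^ α :=
    (rpow_le_rpow_neg_mul_rpow_of_le_mul hα hs zero_lt_two hscale).trans (by gcongr)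
  have h7 : (7 * R) ^ (d - 1) * (7 * R) ^ (α + 1) ≤ 7 ^ d * (R ^ d * R ^ α) := by
    have h71 : (7 : ℝ) ^ (α + 1) ≤ 7 := by
      simpa using
        Real.rpow_le_rpow_of_exponent_le (by norm_num : (1 : ℝ) ≤ 7) (by linarith : α + 1 ≤ 1)
    have e : 7 ^ d * (R ^ d * R ^ α) = (7 * R) ^ (d - 1) * (7 * (R ^ α * R)) := by
      obtain ⟨k, rfl⟩ : ∃ k, d = k + 1 := ⟨d - 1, by omega⟩
      simp only [add_tsub_cancel_right, pow_succ, mul_pow]; ring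
    rw [Real.mul_rpow (by norm_num) (by linarith), Real.rpow_add_one (x := R) (by positivity), e]
    gcongr
  rw [V_eq_sum_cube α w (by linarith), volumeProfile]
  calc ∑ y ∈ cube w n, nu α y ≤ ∑ y ∈ cube 0 (3 * n), nu α y :=
        sum_le_sum_of_subset_of_nonneg hsub fun y _ _ => nu_nonneg α y
    _ ≤ 2 * (1 + 1 / (α + 1)) * ((7 * R) ^ (d - 1) * (7 * R) ^ (α + 1)) :=
        sum_cube_zero_nu_le hα1 hα hd (3 * n) (by push_cast; linarith)
    _ ≤ 2 * (1 + 1 / (α + 1)) * (7 ^ d * (R ^ d * (2 * scale w R ^ α))) := by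
        have hC : 0 ≤ 2 * (1 + 1 / (α + 1)) := by
          have : 0 < α + 1 := by linarith
          positivity
        exact mul_le_mul_of_nonneg_left (h7.trans (by gcongr)) hC
    _ = 4 * 7 ^ d * (1 + 1 / (α + 1)) * (R ^ d * scale w R ^ α) := by ring

end UpperBound

section Comparison

variable {d : ℕ} {α : ℝ}

lemma exists_volumeProfile_comparable (hd : 1 ≤ d) (hα : -1 < α) :
    ∃ C : ℝ, 1 ≤ C ∧ ∀ (x : Fin d → ℤ) (r : ℝ), 1 ≤ r →
      volumeProfile α x r ≤ C * V α x r ∧ V α x r ≤ C * volumeProfile α x r := by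
  obtain ⟨A, B, hA, hB⟩ : ∃ A B : ℝ,
      (∀ (x : Fin d → ℤ) (r : ℝ), 1 ≤ r → volumeProfile α x r ≤ A * V α x r) ∧
      (∀ (x : Fin d → ℤ) (r : ℝ), 1 ≤ r → V α x r ≤ B * volumeProfile α x r) := by
    rcases le_total 0 α with h | h
    · exact ⟨_, _, fun x _ hr => volumeProfile_le_V_of_nonneg h hd x hr,
        fun x _ hr => V_le_volumeProfile_of_nonneg h x hr⟩
    refine ⟨_, max (3 ^ d * 2 ^ (-α)) (4 * 7 ^ d * (1 + 1 / (α + 1))),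
      fun x _ hr => volumeProfile_le_V_of_nonpos h x hr, fun x r hr => ?_⟩
    have hM := volumeProfile_nonneg α x (zero_le_one.trans hr)
    rcases le_or_gt (2 * ⌊r⌋₊) (linf x) with hx | hx
    · exact (V_le_volumeProfile_of_two_mul_floor_le h hr hx).trans
        (mul_le_mul_of_nonneg_right (le_max_left _ _) hM)
    · exact (V_le_volumeProfile_of_lt_two_mul_floor hα h hd hr hx).trans
        (mul_le_mul_of_nonneg_right (le_max_right _ _) hM)
  refine ⟨max (max A B) 1, le_max_right _ _, fun x r hr =>
    ⟨(hA x r hr).trans ?_, (hB x r hr).trans ?_⟩⟩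
  · exact mul_le_mul_of_nonneg_right ((le_max_left _ _).trans (le_max_left _ _))
      (V_nonneg α x (zero_le_one.trans hr))
  · exact mul_le_mul_of_nonneg_right ((le_max_right _ _).trans (le_max_left _ _))
      (volumeProfile_nonneg α x (zero_le_one.trans hr))

lemma volumeProfile_le_mul_volumeProfile (α : ℝ) {x w : Fin d → ℤ} {r R : ℝ}
    (hxw : ((linf (x - w) : ℕ) : ℝ) ≤ R) (hr : 1 ≤ r) (hrR : r ≤ R) :
    volumeProfile α w R ≤ 2 ^ |α| * (R / r) ^ ((d : ℝ) + |α|) * volumeProfile α x r := by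
  have hr0 : 0 < r := by linarith
  have hRr : 1 ≤ R / r := (one_le_div hr0).2 hrR
  have hsx : 0 < scale x r := by linarith [le_scale x r]
  have hsw : 0 ≤ scale w R := by linarith [le_scale w R]
  have hRd : R ^ d = (R / r) ^ d * r ^ d := by rw [← mul_pow, div_mul_cancel₀ _ hr0.ne']
  rw [volumeProfile, volumeProfile, Real.rpow_add (by linarith), Real.rpow_natCast, hRd]
  rcases le_total 0 α with hα | hα
  · have h := rpow_le_rpow_mul_rpow_of_le_mul hα hsw (by positivity) hsx.le
      (scale_le_two_mul_div_mul_scale hxw hr0 hrR)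
    rw [Real.mul_rpow zero_le_two (by positivity)] at h
    calc (R / r) ^ d * r ^ d * scale w R ^ α
        ≤ (R / r) ^ d * r ^ d * (2 ^ α * (R / r) ^ α * scale x r ^ α) := by gcongr
      _ = _ := by rw [abs_of_nonneg hα]; ring
  · have h := rpow_le_rpow_neg_mul_rpow_of_le_mul hα hsx zero_lt_two
      (scale_le_two_mul_scale hxw hrR)
    have h1 : 1 ≤ (R / r) ^ (-α) := Real.one_le_rpow hRr (by linarith)
    calc (R / r) ^ d * r ^ d * scale w R ^ α
        ≤ (R / r) ^ d * r ^ d * (2 ^ (-α) * scale x r ^ α) := by gcongr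
      _ ≤ (R / r) ^ d * r ^ d * (2 ^ (-α) * scale x r ^ α) * (R / r) ^ (-α) :=
        le_mul_of_one_le_right (by positivity) h1
      _ = _ := by rw [abs_of_nonpos hα]; ring

end Comparison

/-- There is `c₁ > 0`, depending only on `α` and `d`, such that
for every `w ∈ ℤ^d`, real `R ≥ 1`, `x ∈ B(w,R)` and real `r ∈ [1,R]`,
`V(w,R) ≤ c₁ (R/r)^{c₁} V(x,r)`; in particular `V(w,R) ≤ c₁ R^{c₁} ν_x`. -/
theorem volume_doubling (d : ℕ) (hd : 1 ≤ d) (α : ℝ) (hα : -1 < α) :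
    ∃ c₁ : ℝ, 0 < c₁ ∧
      ∀ (w : Fin d → ℤ) (R : ℝ), 1 ≤ R →
        ∀ x : Fin d → ℤ, ((linf (x - w) : ℕ) : ℝ) ≤ R →
          (∀ r : ℝ, 1 ≤ r → r ≤ R → V α w R ≤ c₁ * (R / r) ^ c₁ * V α x r) ∧
            V α w R ≤ c₁ * R ^ c₁ * nu α x := by
  obtain ⟨C, hC, hcomp⟩ := exists_volumeProfile_comparable hd hα
  set K := C * 2 ^ |α| * C
  set E := (d : ℝ) + |α|
  have hK : C * 2 ^ |α| ≤ K := le_mul_of_one_le_right (by positivity) hC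
  have hK0 : 0 ≤ K := (mul_nonneg (by linarith) (by positivity)).trans hK
  have hE : 0 ≤ E := by positivity
  refine ⟨K + E + 1, by positivity, fun w R hR x hxw => ⟨fun r hr hrR => ?_, ?_⟩⟩
  · have hRr : 1 ≤ R / r := (one_le_div (by linarith)).2 hrR
    calc V α w R ≤ C * volumeProfile α w R := (hcomp w R hR).2
      _ ≤ C * (2 ^ |α| * (R / r) ^ E * (C * V α x r)) := by
          gcongr
          exact (volumeProfile_le_mul_volumeProfile α hxw hr hrR).trans
            (by gcongr; exact (hcomp x r hr).1)
      _ = K * (R / r) ^ E * V α x r := by ring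
      _ ≤ (K + E + 1) * (R / r) ^ (K + E + 1) * V α x r := by
          gcongr
          · exact V_nonneg α x (by linarith)
          · linarith
          · linarith
  · calc V α w R ≤ C * volumeProfile α w R := (hcomp w R hR).2
      _ ≤ C * (2 ^ |α| * R ^ E * nu α x) := by
          gcongr
          simpa [volumeProfile_one] using volumeProfile_le_mul_volumeProfile α hxw le_rfl hR
      _ ≤ (K + E + 1) * R ^ (K + E + 1) * nu α x := by
          rw [← mul_assoc, ← mul_assoc]
          gcongr
          · exact nu_nonneg α x
          · linarith
          · linarith
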